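/- Let G be a finite simple graph, let W be a non-empty module of G, and let a ∈ W. Then a is adjacent to every other vertex of W if and only if a belongs to every max clique C of G with C ∩ W ≠ ∅. -/

import Mathlib

/-- A max clique: an inclusion-maximal clique. -/
def IsMaxClique {V : Type} (G : SimpleGraph V) (s : Set V) : Prop :=
  G.IsClique s ∧ ∀ t : Set V, G.IsClique t → s ⊆ t → t = s

/-- A module of `G`: a set `W` of vertices such that every vertex outside `W` is
adjacent either to all vertices of `W` or to none of them. -/
def IsModule {V : Type} (G : SimpleGraph V) (W : Set V) : Prop :=
  ∀ v : V, v ∉ W → (∀ w ∈ W, G.Adj v w) ∨ (∀ w ∈ W, ¬ G.Adj v w)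

/-! If `a` is adjacent to all of `W ∖ {a}`, it is adjacent to every vertex of a clique meeting `W`:
a vertex of the clique outside `W` sees the clique's vertex in `W`, hence, `W` being a module,
all of `W`. A max clique containing a vertex of `W` therefore contains `a`. Conversely every
`b ∈ W ∖ {a}` lies in a max clique, which then contains `a` as well. -/

section

variable {V : Type} {G : SimpleGraph V}

lemma isMaxClique_iff_maximal {s : Set V} : IsMaxClique G s ↔ Maximal G.IsClique s :=
  and_congr_right fun _ ↦ forall₂_congr fun _ _ ↦
    ⟨fun h hst ↦ (h hst).le, fun h hst ↦ (h hst).antisymm hst⟩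

lemma exists_isMaxClique_superset [Finite V] {s : Set V} (hs : G.IsClique s) :
    ∃ C, s ⊆ C ∧ IsMaxClique G C := by
  simpa only [isMaxClique_iff_maximal] using Finite.exists_le_maximal hs

lemma exists_isMaxClique_mem [Finite V] (v : V) : ∃ C, v ∈ C ∧ IsMaxClique G C := by
  simpa using exists_isMaxClique_superset (G.isClique_singleton v)

lemma IsMaxClique.mem_of_forall_adj {C : Set V} (hC : IsMaxClique G C) {a : V}
    (h : ∀ v ∈ C, a ≠ v → G.Adj a v) : a ∈ C :=
  hC.2 _ (hC.1.insert h) (Set.subset_insert a C) ▸ Set.mem_insert a C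

lemma IsModule.adj_of_adj {W : Set V} (hW : IsModule G W) {v w w' : V} (hv : v ∉ W)
    (hw : w ∈ W) (hw' : w' ∈ W) (hvw : G.Adj v w) : G.Adj v w' :=
  (hW v hv).elim (· w' hw') fun h ↦ absurd hvw (h w hw)

lemma IsModule.adj_of_mem_isClique {W : Set V} (hW : IsModule G W) {a : V} (ha : a ∈ W)
    (haW : ∀ b ∈ W, b ≠ a → G.Adj a b) {C : Set V} (hC : G.IsClique C) {c : V} (hcC : c ∈ C)
    (hcW : c ∈ W) {v : V} (hvC : v ∈ C) (hav : a ≠ v) : G.Adj a v := by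
  by_cases hvW : v ∈ W
  · exact haW v hvW hav.symm
  · have hvc : G.Adj v c := hC hvC hcC fun h ↦ hvW (h ▸ hcW)
    exact (hW.adj_of_adj hvW hcW ha hvc).symm

end

theorem module_apex_iff_in_all_maxCliques_general {V : Type} [Fintype V] (G : SimpleGraph V)
    (W : Set V) (hW : IsModule G W) (a : V) (ha : a ∈ W) :
    (∀ b ∈ W, b ≠ a → G.Adj a b) ↔
      (∀ C : Set V, IsMaxClique G C → (C ∩ W).Nonempty → a ∈ C) := by
  constructor
  · rintro haW C hC ⟨c, hcC, hcW⟩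
    exact hC.mem_of_forall_adj fun v hvC hav ↦ hW.adj_of_mem_isClique ha haW hC.1 hcC hcW hvC hav
  · intro h b hbW hba
    obtain ⟨C, hbC, hC⟩ := exists_isMaxClique_mem (G := G) b
    exact hC.1 (h C hC ⟨b, hbC, hbW⟩) hbC hba.symm

/-- Let `W` be a non-empty module of the finite simple graph `G` and
`a ∈ W`.  Then `a` is adjacent to every other vertex of `W` iff `a` belongs to every
max clique `C` of `G` with `C ∩ W ≠ ∅`. -/
theorem module_apex_iff_in_all_maxCliques {V : Type} [Fintype V] (G : SimpleGraph V)
    (W : Set V) (hW : IsModule G W) (hne : W.Nonempty) (a : V) (ha : a ∈ W) :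
    (∀ b ∈ W, b ≠ a → G.Adj a b) ↔
      (∀ C : Set V, IsMaxClique G C → (C ∩ W).Nonempty → a ∈ C) :=
  module_apex_iff_in_all_maxCliques_general G W hW a ha
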